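/- Let (X, 𝓜, μ) be a measure space with 0 < μ(X) < ∞ and let {𝔅_n}_{n≥0} be a filtration: 𝔅_0 = {X}, each 𝔅_n is a finite or countable partition of X into measurable sets of positive measure, and each A ∈ 𝔅_n is a union of members of 𝔅_{n+1}. Set 𝔅 = ⋃_{n≥0} 𝔅_n; for A ∈ 𝔅_n let its children be the members of 𝔅_{n+1} contained in A, and define the martingale difference Δ_A f = Σ_{B child of A} (f_B − f_A)·1_B, where f_B = μ(B)⁻¹ ∫_B f. For B ∈ 𝔅 let B* denote the largest set A ∈ 𝔅 with B ⊆ A and μ(A) ≤ 2μ(B) (which exists since the ancestors of B form a finite chain up to X). Then for every f ∈ L¹(X), every B ∈ 𝔅 and every A ∈ 𝔅, the function Δ_A(f · 1_{X∖B*}) is μ-a.e. constant on B; consequently, for every choice of coefficients ε_A with |ε_A| ≤ 1 and every N ≥ 0, the partial martingale transform Σ_{A ∈ 𝔅_0 ∪ … ∪ 𝔅_N} ε_A Δ_A(f · 1_{X∖B*}) is μ-a.e. constant on B. -/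

import Mathlib

open MeasureTheory Set
open scoped ENNReal

/-- the mean `f_B` of `f` over a set `B`. -/
noncomputable def mean {X : Type*} [MeasurableSpace X] (μ : Measure X) (f : X → ℝ)
    (B : Set X) : ℝ :=
  (∫ x in B, f x ∂μ) / (μ B).toReal

/-- the martingale difference `Δ_A f = ∑_{B child of A} (f_B − f_A)·1_B`, for `A ∈ 𝔅n m`,
the children being the members of `𝔅n (m+1)` contained in `A`. -/
noncomputable def mdiff {X : Type*} [MeasurableSpace X] (μ : Measure X)
    (𝔅n : ℕ → Set (Set X)) (m : ℕ) (A : Set X) (f : X → ℝ) (x : X) : ℝ :=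
  ∑' B : {B : Set X // B ∈ 𝔅n (m + 1) ∧ B ⊆ A},
    Set.indicator (B : Set X) (fun _ => mean μ f B - mean μ f A) x

/-!
Since the partitions are nested, a set `A` of generation `l` is either contained in `B` or
disjoint from it when `l ≥ m`, while for `l < m` the set `B` lies inside a single child of `A`.
In the first case `Δ_A (f · 1_{B*ᶜ})` vanishes on `B`: either `B` misses the support of `Δ_A`, or
all means involved are over subsets of `B ⊆ B*`, where `f · 1_{B*ᶜ}` is zero. In the second case
`Δ_A` is constant on each child of `A`, hence on `B`.
-/

section Nested

variable {X : Type*} {𝔅n : ℕ → Set (Set X)}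

theorem exists_mem_subset_of_mem_of_le
    (hrefine : ∀ m, ∀ A ∈ 𝔅n m, A = ⋃₀ {B ∈ 𝔅n (m + 1) | B ⊆ A})
    {m : ℕ} {A : Set X} (hA : A ∈ 𝔅n m) {x : X} (hx : x ∈ A) :
    ∀ k, m ≤ k → ∃ D ∈ 𝔅n k, x ∈ D ∧ D ⊆ A := by
  refine Nat.le_induction ⟨A, hA, hx, subset_rfl⟩ fun k _ ⟨D, hD, hxD, hDA⟩ => ?_
  rw [hrefine k D hD] at hxD
  obtain ⟨E, ⟨hE, hED⟩, hxE⟩ := hxD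
  exact ⟨E, hE, hxE, hED.trans hDA⟩

theorem subset_of_not_disjoint_of_le
    (hdisj : ∀ m, (𝔅n m).PairwiseDisjoint id)
    (hrefine : ∀ m, ∀ A ∈ 𝔅n m, A = ⋃₀ {B ∈ 𝔅n (m + 1) | B ⊆ A})
    {m k : ℕ} (hmk : m ≤ k) {A C : Set X} (hA : A ∈ 𝔅n m) (hC : C ∈ 𝔅n k)
    (hCA : ¬Disjoint C A) : C ⊆ A := by
  obtain ⟨x, hxC, hxA⟩ := not_disjoint_iff.mp hCA
  obtain ⟨D, hD, hxD, hDA⟩ := exists_mem_subset_of_mem_of_le hrefine hA hxA k hmk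
  rwa [(hdisj k).elim hC hD (not_disjoint_iff.mpr ⟨x, hxC, hxD⟩)]

end Nested

section MartingaleDifference

variable {X : Type*} [MeasurableSpace X] {μ : Measure X} {𝔅n : ℕ → Set (Set X)} {l : ℕ}
  {A : Set X} {h : X → ℝ} {x : X}

theorem mean_indicator_compl_eq_zero {S T : Set X} (hST : S ⊆ T) (f : X → ℝ) :
    mean μ (Tᶜ.indicator f) S = 0 := by
  have hint : ∫ y in S, Tᶜ.indicator f y ∂μ = 0 :=
    setIntegral_eq_zero_of_forall_eq_zero fun y hy => indicator_of_notMem (not_not.mpr (hST hy)) f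
  rw [mean, hint, zero_div]

theorem mdiff_eq_zero_of_forall_notMem (hx : ∀ C ∈ 𝔅n (l + 1), C ⊆ A → x ∉ C) :
    mdiff μ 𝔅n l A h x = 0 :=
  (tsum_congr fun C : {C : Set X // C ∈ 𝔅n (l + 1) ∧ C ⊆ A} =>
    indicator_of_notMem (hx C C.2.1 C.2.2) _).trans tsum_zero

theorem mdiff_eq_zero_of_notMem (hx : x ∉ A) : mdiff μ 𝔅n l A h x = 0 :=
  mdiff_eq_zero_of_forall_notMem fun _ _ hCA hxC => hx (hCA hxC)

theorem mdiff_eq_zero_of_forall_mean_eq_zero (hmean : ∀ S ⊆ A, mean μ h S = 0) :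
    mdiff μ 𝔅n l A h x = 0 := by
  refine (tsum_congr fun C => ?_).trans tsum_zero
  simp only [hmean _ C.2.2, hmean A subset_rfl, sub_self, indicator_zero]

theorem mdiff_eq_of_mem (hdisj : (𝔅n (l + 1)).PairwiseDisjoint id) {C : Set X}
    (hC : C ∈ 𝔅n (l + 1)) (hCA : C ⊆ A) (hx : x ∈ C) :
    mdiff μ 𝔅n l A h x = mean μ h C - mean μ h A := by
  rw [mdiff, tsum_eq_single (⟨C, hC, hCA⟩ : {B : Set X // B ∈ 𝔅n (l + 1) ∧ B ⊆ A})]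
  · exact indicator_of_mem hx _
  · intro D hD
    refine indicator_of_notMem (fun hxD => hD (Subtype.ext ?_)) _
    exact hdisj.elim D.2.1 hC (not_disjoint_iff.mpr ⟨x, hxD, hx⟩)

variable (hdisj : ∀ m, (𝔅n m).PairwiseDisjoint id)
  (hrefine : ∀ m, ∀ A ∈ 𝔅n m, A = ⋃₀ {B ∈ 𝔅n (m + 1) | B ⊆ A})
include hdisj hrefine

theorem exists_mdiff_eq_on_of_lt {m : ℕ} {B : Set X} (hB : B ∈ 𝔅n m) (hlm : l < m) :
    ∃ c : ℝ, ∀ x ∈ B, mdiff μ 𝔅n l A h x = c := by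
  by_cases hchild : ∃ C ∈ 𝔅n (l + 1), C ⊆ A ∧ B ⊆ C
  · obtain ⟨C, hC, hCA, hBC⟩ := hchild
    exact ⟨_, fun x hx => mdiff_eq_of_mem (hdisj _) hC hCA (hBC hx)⟩
  · refine ⟨0, fun x hx => mdiff_eq_zero_of_forall_notMem fun C hC hCA hxC => hchild ?_⟩
    exact ⟨C, hC, hCA, subset_of_not_disjoint_of_le hdisj hrefine hlm hC hB
      (not_disjoint_iff.mpr ⟨x, hx, hxC⟩)⟩

theorem mdiff_indicator_compl_eq_zero_on_of_le {m : ℕ} {B T : Set X} (hB : B ∈ 𝔅n m)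
    (hBT : B ⊆ T) (hA : A ∈ 𝔅n l) (hml : m ≤ l) (f : X → ℝ) :
    ∀ x ∈ B, mdiff μ 𝔅n l A (Tᶜ.indicator f) x = 0 := by
  intro x hx
  by_cases hAB : Disjoint A B
  · exact mdiff_eq_zero_of_notMem (disjoint_right.mp hAB hx)
  · have hAT : A ⊆ T := (subset_of_not_disjoint_of_le hdisj hrefine hml hB hA hAB).trans hBT
    exact mdiff_eq_zero_of_forall_mean_eq_zero fun S hS =>
      mean_indicator_compl_eq_zero (hS.trans hAT) f

theorem exists_mdiff_indicator_compl_eq_on {m : ℕ} {B T : Set X} (hB : B ∈ 𝔅n m)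
    (hBT : B ⊆ T) (hA : A ∈ 𝔅n l) (f : X → ℝ) :
    ∃ c : ℝ, ∀ x ∈ B, mdiff μ 𝔅n l A (Tᶜ.indicator f) x = c := by
  rcases lt_or_ge l m with hlm | hml
  · exact exists_mdiff_eq_on_of_lt hdisj hrefine hB hlm
  · exact ⟨0, mdiff_indicator_compl_eq_zero_on_of_le hdisj hrefine hB hBT hA hml f⟩

end MartingaleDifference

theorem martingale_transform_locally_constant_general
    {X : Type*} [MeasurableSpace X] (μ : Measure X)
    (𝔅n : ℕ → Set (Set X))
    (hdisj : ∀ m, (𝔅n m).PairwiseDisjoint id)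
    (hrefine : ∀ m, ∀ A ∈ 𝔅n m, A = ⋃₀ {B ∈ 𝔅n (m + 1) | B ⊆ A}) :
    ∀ f : X → ℝ, Integrable f μ →
      ∀ (m : ℕ) (B : Set X), B ∈ 𝔅n m →
        ∀ Bstar : Set X,
          (∃ k, Bstar ∈ 𝔅n k) → B ⊆ Bstar → μ Bstar ≤ 2 * μ B →
          (∀ (k : ℕ) (A : Set X), A ∈ 𝔅n k → B ⊆ A → μ A ≤ 2 * μ B → A ⊆ Bstar) →
          (∀ (l : ℕ), ∀ A ∈ 𝔅n l,
            ∃ c : ℝ, ∀ᵐ x ∂μ, x ∈ B →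
              mdiff μ 𝔅n l A (Set.indicator Bstarᶜ f) x = c) ∧
          (∀ ε : ℕ → Set X → ℝ, (∀ l A, |ε l A| ≤ 1) →
            ∀ N : ℕ, ∃ c : ℝ, ∀ᵐ x ∂μ, x ∈ B →
              (∑ l ∈ Finset.range (N + 1), ∑' A : 𝔅n l,
                ε l (A : Set X) * mdiff μ 𝔅n l (A : Set X) (Set.indicator Bstarᶜ f) x) = c) := by
  intro f _ m B hB Bstar _ hBsub _ _
  have hconst (l : ℕ) (A : Set X) (hA : A ∈ 𝔅n l) :=
    exists_mdiff_indicator_compl_eq_on (μ := μ) hdisj hrefine hB hBsub hA f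
  refine ⟨fun l A hA => ?_, fun ε _ N => ?_⟩
  · obtain ⟨c, hc⟩ := hconst l A hA
    exact ⟨c, ae_of_all μ hc⟩
  · choose! c hc using hconst
    refine ⟨∑ l ∈ Finset.range (N + 1), ∑' A : 𝔅n l, ε l A * c l A, ae_of_all μ fun x hx => ?_⟩
    exact Finset.sum_congr rfl fun l _ => tsum_congr fun A => by rw [hc l A A.2 x hx]

theorem martingale_transform_locally_constant
    {X : Type*} [MeasurableSpace X] (μ : Measure X)
    (hpos : 0 < μ Set.univ) (hfin : μ Set.univ < ∞)
    (𝔅n : ℕ → Set (Set X))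
    (h0 : 𝔅n 0 = {Set.univ})
    (hcount : ∀ m, (𝔅n m).Countable)
    (hmeas : ∀ m, ∀ A ∈ 𝔅n m, MeasurableSet A)
    (hApos : ∀ m, ∀ A ∈ 𝔅n m, 0 < μ A)
    (hdisj : ∀ m, (𝔅n m).PairwiseDisjoint id)
    (hcover : ∀ m, ⋃₀ 𝔅n m = Set.univ)
    (hrefine : ∀ m, ∀ A ∈ 𝔅n m, A = ⋃₀ {B ∈ 𝔅n (m + 1) | B ⊆ A}) :
    ∀ f : X → ℝ, Integrable f μ →
      ∀ (m : ℕ) (B : Set X), B ∈ 𝔅n m →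
        ∀ Bstar : Set X,
          (∃ k, Bstar ∈ 𝔅n k) → B ⊆ Bstar → μ Bstar ≤ 2 * μ B →
          (∀ (k : ℕ) (A : Set X), A ∈ 𝔅n k → B ⊆ A → μ A ≤ 2 * μ B → A ⊆ Bstar) →
          (∀ (l : ℕ), ∀ A ∈ 𝔅n l,
            ∃ c : ℝ, ∀ᵐ x ∂μ, x ∈ B →
              mdiff μ 𝔅n l A (Set.indicator Bstarᶜ f) x = c) ∧
          (∀ ε : ℕ → Set X → ℝ, (∀ l A, |ε l A| ≤ 1) →
            ∀ N : ℕ, ∃ c : ℝ, ∀ᵐ x ∂μ, x ∈ B →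
              (∑ l ∈ Finset.range (N + 1), ∑' A : 𝔅n l,
                ε l (A : Set X) * mdiff μ 𝔅n l (A : Set X) (Set.indicator Bstarᶜ f) x) = c) :=
  martingale_transform_locally_constant_general μ 𝔅n hdisj hrefine
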